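/- arXiv:2504.15827 — 4 statements merged into one kernel-verified Lean document; each statement's English description precedes it below -/
import Mathlib

section
/- Let t ∈ ℕ, let τ ≥ 0, let g₀, …, g_t : Ω → ℝ^d be square-integrable random vectors, and let w₀, …, w_t be nonnegative real numbers. Suppose that for all i ≠ j, Cov(g_i, g_j) ≤ τ·√(Var(g_i)·Var(g_j)). Then Var(Σ_{i=0}^t w_i g_i) ≤ (1 + tτ)·Σ_{i=0}^t w_i² Var(g_i). -/
open MeasureTheory

/-- Variance of a square-integrable random vector `X : Ω → ℝ^d`:
`Var(X) = 𝔼[‖X − 𝔼[X]‖²]`. -/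
noncomputable def vecVar {Ω : Type*} [MeasurableSpace Ω] (P : Measure Ω) {d : ℕ}
    (X : Ω → EuclideanSpace ℝ (Fin d)) : ℝ :=
  ∫ ω, ‖X ω - ∫ ω', X ω' ∂P‖ ^ 2 ∂P

/-- Covariance of two square-integrable random vectors `X, Y : Ω → ℝ^d`:
`Cov(X, Y) = 𝔼[⟨X − 𝔼[X], Y − 𝔼[Y]⟩]`. -/
noncomputable def vecCov {Ω : Type*} [MeasurableSpace Ω] (P : Measure Ω) {d : ℕ}
    (X Y : Ω → EuclideanSpace ℝ (Fin d)) : ℝ :=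
  ∫ ω, (inner ℝ (X ω - ∫ ω', X ω' ∂P) (Y ω - ∫ ω', Y ω' ∂P) : ℝ) ∂P

/-
Write `V i = Var(g i)` and `x i = w i * √(V i)`. Expanding the variance of the weighted sum gives the
double sum `∑ i j, w i w j Cov(g i, g j)`, whose diagonal terms are `x i ^ 2` and whose off-diagonal
terms are at most `τ x i x j`. Hence it is at most `τ (∑ x i)² + (1 - τ) ∑ x i ²`, and Cauchy–Schwarz
`(∑ x i)² ≤ (t + 1) ∑ x i ²` gives the factor `1 + t τ`.
-/

theorem MeasureTheory.MemLp.integrable_inner {α 𝕜 E : Type*} [MeasurableSpace α] {μ : Measure α}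
    [RCLike 𝕜] [NormedAddCommGroup E] [InnerProductSpace 𝕜 E] {f g : α → E}
    (hf : MemLp f 2 μ) (hg : MemLp g 2 μ) : Integrable (fun a => inner 𝕜 (f a) (g a)) μ := by
  refine (L2.integrable_inner (𝕜 := 𝕜) (hf.toLp f) (hg.toLp g)).congr ?_
  filter_upwards [hf.coeFn_toLp, hg.coeFn_toLp] with a hfa hga
  rw [hfa, hga]

namespace Finset

theorem sum_sum_le_of_offDiag_le {ι : Type*} (s : Finset ι) {c : ι → ι → ℝ} {x : ι → ℝ} {τ : ℝ}
    (hτ : 0 ≤ τ) (hdiag : ∀ i ∈ s, c i i = x i ^ 2)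
    (hoff : ∀ i ∈ s, ∀ j ∈ s, i ≠ j → c i j ≤ τ * (x i * x j)) :
    ∑ i ∈ s, ∑ j ∈ s, c i j ≤ (1 + (#s - 1) * τ) * ∑ i ∈ s, x i ^ 2 := by
  classical
  have hc : ∀ i ∈ s, ∀ j ∈ s,
      c i j ≤ τ * (x i * x j) + if i = j then (1 - τ) * x i ^ 2 else 0 := by
    intro i hi j hj
    by_cases hij : i = j
    · subst hij; rw [if_pos rfl, hdiag i hi]; exact le_of_eq (by ring)
    · rw [if_neg hij, add_zero]; exact hoff i hi j hj hij
  calc ∑ i ∈ s, ∑ j ∈ s, c i j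
      ≤ ∑ i ∈ s, ∑ j ∈ s, (τ * (x i * x j) + if i = j then (1 - τ) * x i ^ 2 else 0) :=
        sum_le_sum fun i hi => sum_le_sum fun j hj => hc i hi j hj
    _ = τ * (∑ i ∈ s, x i) ^ 2 + (1 - τ) * ∑ i ∈ s, x i ^ 2 := by
        simp only [sum_add_distrib, sum_ite_eq, ← mul_sum, sq, sum_mul_sum]
        rw [sum_congr rfl fun i hi => if_pos hi, ← mul_sum]
    _ ≤ τ * (#s * ∑ i ∈ s, x i ^ 2) + (1 - τ) * ∑ i ∈ s, x i ^ 2 := by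
        gcongr; exact sq_sum_le_card_mul_sum_sq
    _ = (1 + (#s - 1) * τ) * ∑ i ∈ s, x i ^ 2 := by ring

end Finset

section Moments

variable {Ω : Type*} [MeasurableSpace Ω] {P : Measure Ω} {d : ℕ}

theorem vecVar_nonneg (X : Ω → EuclideanSpace ℝ (Fin d)) : 0 ≤ vecVar P X :=
  integral_nonneg fun _ => sq_nonneg _

theorem vecCov_self (X : Ω → EuclideanSpace ℝ (Fin d)) : vecCov P X X = vecVar P X :=
  integral_congr_ae (.of_forall fun _ => real_inner_self_eq_norm_sq _)

theorem vecVar_sum_smul [IsFiniteMeasure P] {ι : Type*} (s : Finset ι)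
    {g : ι → Ω → EuclideanSpace ℝ (Fin d)} (hg : ∀ i ∈ s, MemLp (g i) 2 P) (w : ι → ℝ) :
    vecVar P (fun ω => ∑ i ∈ s, w i • g i ω)
      = ∑ i ∈ s, ∑ j ∈ s, w i * w j * vecCov P (g i) (g j) := by
  set Y : ι → Ω → EuclideanSpace ℝ (Fin d) := fun i ω => g i ω - ∫ ω', g i ω' ∂P
  have hY : ∀ i ∈ s, MemLp (Y i) 2 P := fun i hi => (hg i hi).sub (memLp_const _)
  have hmean : ∫ ω, ∑ i ∈ s, w i • g i ω ∂P = ∑ i ∈ s, w i • ∫ ω, g i ω ∂P := by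
    rw [integral_finsetSum s (f := fun i ω => w i • g i ω)
      fun i hi => ((hg i hi).integrable one_le_two).smul (w i)]
    simp only [integral_smul]
  have hcentered : ∀ ω, ∑ i ∈ s, w i • g i ω - ∑ i ∈ s, w i • ∫ ω', g i ω' ∂P
      = ∑ i ∈ s, w i • Y i ω := fun ω => by
    simp only [Y, smul_sub, Finset.sum_sub_distrib]
  have hexpand : ∀ ω, ‖∑ i ∈ s, w i • Y i ω‖ ^ 2
      = ∑ i ∈ s, ∑ j ∈ s, w i * w j * inner ℝ (Y i ω) (Y j ω) := fun ω => by
    rw [← real_inner_self_eq_norm_sq, sum_inner]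
    simp only [inner_sum, real_inner_smul_left, real_inner_smul_right]
    exact Finset.sum_congr rfl fun i _ => Finset.sum_congr rfl fun j _ => by ring
  have hint : ∀ i ∈ s, ∀ j ∈ s, Integrable (fun ω => w i * w j * inner ℝ (Y i ω) (Y j ω)) P :=
    fun i hi j hj => ((hY i hi).integrable_inner (hY j hj)).const_mul _
  unfold vecVar
  simp only [hmean, hcentered, hexpand]
  rw [integral_finsetSum s fun i hi => integrable_finsetSum s (hint i hi)]
  refine Finset.sum_congr rfl fun i hi => ?_
  rw [integral_finsetSum s (hint i hi)]
  exact Finset.sum_congr rfl fun j _ => integral_const_mul _ _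

end Moments

/-- If the pairwise covariances of `g₀, …, g_t` satisfy
`Cov(g_i, g_j) ≤ τ·√(Var(g_i)·Var(g_j))` for `i ≠ j`, then for nonnegative weights
`w₀, …, w_t`, `Var(Σ w_i g_i) ≤ (1 + tτ)·Σ w_i² Var(g_i)`. -/
theorem variance_weighted_sum_le {Ω : Type*} [MeasurableSpace Ω] (P : Measure Ω)
    [IsProbabilityMeasure P] {d : ℕ} (t : ℕ) (τ : ℝ) (hτ : 0 ≤ τ)
    (g : ℕ → Ω → EuclideanSpace ℝ (Fin d))
    (hg : ∀ i, i ≤ t → MemLp (g i) 2 P)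
    (w : ℕ → ℝ) (hw : ∀ i, i ≤ t → 0 ≤ w i)
    (hcov : ∀ i j, i ≤ t → j ≤ t → i ≠ j →
      vecCov P (g i) (g j) ≤ τ * Real.sqrt (vecVar P (g i) * vecVar P (g j))) :
    vecVar P (fun ω => ∑ i ∈ Finset.range (t + 1), w i • g i ω)
      ≤ (1 + t * τ) * ∑ i ∈ Finset.range (t + 1), w i ^ 2 * vecVar P (g i) := by
  set s := Finset.range (t + 1)
  have hle : ∀ i ∈ s, i ≤ t := fun i hi => Finset.mem_range_succ_iff.mp hi
  set x : ℕ → ℝ := fun i => w i * √(vecVar P (g i))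
  have hx : ∀ i, x i ^ 2 = w i ^ 2 * vecVar P (g i) := fun i => by
    rw [mul_pow, Real.sq_sqrt (vecVar_nonneg _)]
  have hdiag : ∀ i ∈ s, w i * w i * vecCov P (g i) (g i) = x i ^ 2 := fun i _ => by
    rw [vecCov_self, hx]; ring
  have hoff : ∀ i ∈ s, ∀ j ∈ s, i ≠ j →
      w i * w j * vecCov P (g i) (g j) ≤ τ * (x i * x j) := fun i hi j hj hij =>
    calc w i * w j * vecCov P (g i) (g j)
        ≤ w i * w j * (τ * √(vecVar P (g i) * vecVar P (g j))) :=
          mul_le_mul_of_nonneg_left (hcov i j (hle i hi) (hle j hj) hij)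
            (mul_nonneg (hw i (hle i hi)) (hw j (hle j hj)))
      _ = τ * (x i * x j) := by rw [Real.sqrt_mul (vecVar_nonneg _)]; ring
  calc vecVar P (fun ω => ∑ i ∈ s, w i • g i ω)
      = ∑ i ∈ s, ∑ j ∈ s, w i * w j * vecCov P (g i) (g j) :=
        vecVar_sum_smul s (fun i hi => hg i (hle i hi)) w
    _ ≤ (1 + (s.card - 1) * τ) * ∑ i ∈ s, x i ^ 2 :=
        Finset.sum_sum_le_of_offDiag_le s hτ hdiag hoff
    _ = (1 + t * τ) * ∑ i ∈ s, w i ^ 2 * vecVar P (g i) := by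
        simp only [hx, s, Finset.card_range]; push_cast; ring
end

section
/- Let E be a real vector space, α ∈ ℝ, and g_f, g_r : ℕ → E. Define the decoupled momentum sequences m_f, m_r : ℕ → E by m_f(0) = g_f(0), m_f(t+1) = α·m_f(t) + g_f(t+1), m_r(0) = g_r(0), m_r(t+1) = α·m_r(t) + g_r(t+1), and define θ_f, θ_r : ℕ → E by θ_f(0) = −m_f(0), θ_r(t) = θ_f(t) − m_r(t), θ_f(t+1) = θ_r(t) − m_f(t+1). Then for every t ∈ ℕ: −θ_f(t) = Σ_{i=0}^t A_{t−i}·g_f(i) + Σ_{i=0}^{t−1} A_{t−i−1}·g_r(i), and −θ_r(t) = Σ_{i=0}^t A_{t−i}·g_f(i) + Σ_{i=0}^t A_{t−i}·g_r(i), where A_k := Σ_{j=0}^k α^j. -/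
private lemma mom_unfold {E : Type*} [AddCommGroup E] [Module ℝ E]
    (α : ℝ) (g : ℕ → E) (m : ℕ → E)
    (h0 : m 0 = g 0) (h : ∀ t, m (t + 1) = α • m t + g (t + 1)) :
    ∀ t, m t = ∑ i ∈ Finset.range (t + 1), α ^ (t - i) • g i := by
  intro t
  induction t with
  | zero => simpa using h0
  | succ t ih =>
    rw [h t, ih, Finset.smul_sum,
        Finset.sum_range_succ (f := fun i => α ^ (t + 1 - i) • g i)]
    congr 1
    · refine Finset.sum_congr rfl fun i hi => ?_
      rw [Finset.mem_range] at hi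
      rw [smul_smul, ← pow_succ']
      have h2 : t + 1 - i = t - i + 1 := by omega
      rw [h2]
    · simp

private lemma sum_combine {E : Type*} [AddCommGroup E] [Module ℝ E]
    (α : ℝ) (A : ℕ → ℝ) (hA : ∀ k, A k = ∑ j ∈ Finset.range (k + 1), α ^ j)
    (g : ℕ → E) (t : ℕ) :
    (∑ i ∈ Finset.range (t + 1), A (t - i) • g i)
      + ∑ i ∈ Finset.range (t + 2), α ^ (t + 1 - i) • g i
    = ∑ i ∈ Finset.range (t + 2), A (t + 1 - i) • g i := by
  rw [Finset.sum_range_succ (f := fun i => α ^ (t + 1 - i) • g i),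
      Finset.sum_range_succ (f := fun i => A (t + 1 - i) • g i)]
  have hA0 : A (t + 1 - (t + 1)) = 1 := by simp [hA]
  rw [hA0]
  simp only [Nat.sub_self, pow_zero]
  rw [← add_assoc, ← Finset.sum_add_distrib]
  congr 1
  refine Finset.sum_congr rfl fun i hi => ?_
  rw [Finset.mem_range] at hi
  rw [← add_smul]
  congr 1
  have h1 : t + 1 - i = (t - i) + 1 := by omega
  rw [h1, hA, hA, Finset.sum_range_succ, Finset.sum_range_succ, Finset.sum_range_succ]

/-- **Unfolded parameters under decoupled momentum.** With decoupled momentum sequences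
`m_f(0) = g_f(0)`, `m_f(t+1) = α·m_f(t) + g_f(t+1)`, `m_r(0) = g_r(0)`,
`m_r(t+1) = α·m_r(t) + g_r(t+1)` and parameters `θ_f(0) = −m_f(0)`,
`θ_r(t) = θ_f(t) − m_r(t)`, `θ_f(t+1) = θ_r(t) − m_f(t+1)`, we have
`−θ_f(t) = Σ_{i=0}^t A_{t−i}·g_f(i) + Σ_{i=0}^{t−1} A_{t−i−1}·g_r(i)` and
`−θ_r(t) = Σ_{i=0}^t A_{t−i}·g_f(i) + Σ_{i=0}^t A_{t−i}·g_r(i)`,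
where `A_k = Σ_{j=0}^k α^j`. -/
theorem decoupled_momentum_parameter_unfold {E : Type*} [AddCommGroup E] [Module ℝ E]
    (α : ℝ) (gf gr : ℕ → E) (mf mr : ℕ → E) (θf θr : ℕ → E)
    (A : ℕ → ℝ) (hA : ∀ k, A k = ∑ j ∈ Finset.range (k + 1), α ^ j)
    (hmf0 : mf 0 = gf 0) (hmf : ∀ t, mf (t + 1) = α • mf t + gf (t + 1))
    (hmr0 : mr 0 = gr 0) (hmr : ∀ t, mr (t + 1) = α • mr t + gr (t + 1))
    (hθf0 : θf 0 = -mf 0)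
    (hθr : ∀ t, θr t = θf t - mr t)
    (hθf : ∀ t, θf (t + 1) = θr t - mf (t + 1)) :
    ∀ t, (-θf t = (∑ i ∈ Finset.range (t + 1), A (t - i) • gf i)
            + ∑ i ∈ Finset.range t, A (t - i - 1) • gr i) ∧
         (-θr t = (∑ i ∈ Finset.range (t + 1), A (t - i) • gf i)
            + ∑ i ∈ Finset.range (t + 1), A (t - i) • gr i) := by
  have hmfu := mom_unfold α gf mf hmf0 hmf
  have hmru := mom_unfold α gr mr hmr0 hmr
  intro t
  induction t with
  | zero =>
    constructor
    · simp [hθf0, hmf0, hA]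
    · have : θr 0 = θf 0 - mr 0 := hθr 0
      simp [this, hθf0, hmf0, hmr0, hA, sub_eq_add_neg]
      abel
  | succ t ih =>
    obtain ⟨ihf, ihr⟩ := ih
    have hf : -θf (t + 1) = (∑ i ∈ Finset.range (t + 2), A (t + 1 - i) • gf i)
        + ∑ i ∈ Finset.range (t + 1), A (t + 1 - i - 1) • gr i := by
      have : -θf (t + 1) = -θr t + mf (t + 1) := by rw [hθf t]; abel
      rw [this, ihr, hmfu (t + 1)]
      rw [add_assoc, add_comm (∑ i ∈ Finset.range (t + 1), A (t - i) • gr i),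
          ← add_assoc, sum_combine α A hA gf t]
      congr 1
      exact Finset.sum_congr rfl fun i hi => by
        rw [Finset.mem_range] at hi
        congr 2
        omega
    refine ⟨hf, ?_⟩
    have : -θr (t + 1) = -θf (t + 1) + mr (t + 1) := by rw [hθr (t + 1)]; abel
    rw [this, hf, hmru (t + 1)]
    rw [add_assoc]
    congr 1
    have heq : (∑ i ∈ Finset.range (t + 1), A (t + 1 - i - 1) • gr i)
        = ∑ i ∈ Finset.range (t + 1), A (t - i) • gr i :=
      Finset.sum_congr rfl fun i hi => by
        rw [Finset.mem_range] at hi; congr 2; omega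
    rw [heq, sum_combine α A hA gr t]
end

section
/- Let E be a real vector space, α ∈ ℝ, and g_f, g_r : ℕ → E. Define the shared momentum sequences m_f, m_r : ℕ → E by m_f(0) = g_f(0), m_r(t) = α·m_f(t) + g_r(t), m_f(t+1) = α·m_r(t) + g_f(t+1), and define θ_f, θ_r : ℕ → E by θ_f(0) = −m_f(0), θ_r(t) = θ_f(t) − m_r(t), θ_f(t+1) = θ_r(t) − m_f(t+1). Then for every t ∈ ℕ: −θ_f(t) = Σ_{i=0}^t A_{2(t−i)}·g_f(i) + Σ_{i=0}^{t−1} A_{2(t−i)−1}·g_r(i), and −θ_r(t) = Σ_{i=0}^t A_{2(t−i)+1}·g_f(i) + Σ_{i=0}^t A_{2(t−i)}·g_r(i), where A_k := Σ_{j=0}^k α^j. -/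
/-- **Unfolded parameters under shared momentum.** With shared momentum sequences
`m_f(0) = g_f(0)`, `m_r(t) = α·m_f(t) + g_r(t)`, `m_f(t+1) = α·m_r(t) + g_f(t+1)`
and parameters `θ_f(0) = −m_f(0)`, `θ_r(t) = θ_f(t) − m_r(t)`,
`θ_f(t+1) = θ_r(t) − m_f(t+1)`, we have
`−θ_f(t) = Σ_{i=0}^t A_{2(t−i)}·g_f(i) + Σ_{i=0}^{t−1} A_{2(t−i)−1}·g_r(i)` and
`−θ_r(t) = Σ_{i=0}^t A_{2(t−i)+1}·g_f(i) + Σ_{i=0}^t A_{2(t−i)}·g_r(i)`,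
where `A_k = Σ_{j=0}^k α^j`. -/
theorem shared_momentum_parameter_unfold {E : Type*} [AddCommGroup E] [Module ℝ E]
    (α : ℝ) (gf gr : ℕ → E) (mf mr : ℕ → E) (θf θr : ℕ → E)
    (A : ℕ → ℝ) (hA : ∀ k, A k = ∑ j ∈ Finset.range (k + 1), α ^ j)
    (hmf0 : mf 0 = gf 0)
    (hmr : ∀ t, mr t = α • mf t + gr t)
    (hmf : ∀ t, mf (t + 1) = α • mr t + gf (t + 1))
    (hθf0 : θf 0 = -mf 0)
    (hθr : ∀ t, θr t = θf t - mr t)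
    (hθf : ∀ t, θf (t + 1) = θr t - mf (t + 1)) :
    ∀ t, (-θf t = (∑ i ∈ Finset.range (t + 1), A (2 * (t - i)) • gf i)
            + ∑ i ∈ Finset.range t, A (2 * (t - i) - 1) • gr i) ∧
         (-θr t = (∑ i ∈ Finset.range (t + 1), A (2 * (t - i) + 1) • gf i)
            + ∑ i ∈ Finset.range (t + 1), A (2 * (t - i)) • gr i) := by
  have hA0 : A 0 = 1 := by simp [hA]
  have hAs : ∀ k, A (k + 1) = A k + α ^ (k + 1) := fun k => by
    rw [hA, hA, Finset.sum_range_succ]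
  -- momentum unfolding
  have hm : ∀ t, (mf t = (∑ i ∈ Finset.range (t + 1), (α ^ (2 * (t - i))) • gf i)
            + ∑ i ∈ Finset.range t, (α ^ (2 * (t - i) - 1)) • gr i)
       ∧ (mr t = (∑ i ∈ Finset.range (t + 1), (α ^ (2 * (t - i) + 1)) • gf i)
            + ∑ i ∈ Finset.range (t + 1), (α ^ (2 * (t - i))) • gr i) := by
    intro t
    induction t with
    | zero =>
      refine ⟨by simp [hmf0], ?_⟩
      rw [hmr 0, hmf0]
      simp
    | succ t ih =>
      obtain ⟨ihf, ihr⟩ := ih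
      have hf : mf (t + 1) = (∑ i ∈ Finset.range (t + 2), (α ^ (2 * (t + 1 - i))) • gf i)
            + ∑ i ∈ Finset.range (t + 1), (α ^ (2 * (t + 1 - i) - 1)) • gr i := by
        rw [hmf t, ihr, smul_add, Finset.smul_sum, Finset.smul_sum,
          Finset.sum_range_succ (fun i => (α ^ (2 * (t + 1 - i))) • gf i)]
        have e1 : ∀ i ∈ Finset.range (t + 1),
            α • (α ^ (2 * (t - i) + 1)) • gf i = (α ^ (2 * (t + 1 - i))) • gf i := by
          intro i hi
          rw [Finset.mem_range] at hi
          rw [smul_smul, ← pow_succ']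
          congr 2
          omega
        have e2 : ∀ i ∈ Finset.range (t + 1),
            α • (α ^ (2 * (t - i))) • gr i = (α ^ (2 * (t + 1 - i) - 1)) • gr i := by
          intro i hi
          rw [Finset.mem_range] at hi
          rw [smul_smul, ← pow_succ']
          congr 2
          omega
        rw [Finset.sum_congr rfl e1, Finset.sum_congr rfl e2]
        simp
        abel
      refine ⟨hf, ?_⟩
      rw [hmr (t + 1), hf, smul_add, Finset.smul_sum, Finset.smul_sum,
        Finset.sum_range_succ (fun i => (α ^ (2 * (t + 1 - i) + 1)) • gf i),
        Finset.sum_range_succ (fun i => (α ^ (2 * (t + 1 - i))) • gr i)]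
      have e1 : ∀ i ∈ Finset.range (t + 1),
          α • (α ^ (2 * (t + 1 - i))) • gf i = (α ^ (2 * (t + 1 - i) + 1)) • gf i := by
        intro i hi
        rw [smul_smul, ← pow_succ']
      have e2 : ∀ i ∈ Finset.range (t + 1),
          α • (α ^ (2 * (t + 1 - i) - 1)) • gr i = (α ^ (2 * (t + 1 - i))) • gr i := by
        intro i hi
        rw [Finset.mem_range] at hi
        rw [smul_smul, ← pow_succ']
        congr 2
        omega
      rw [Finset.sum_range_succ (fun i => α • (α ^ (2 * (t + 1 - i))) • gf i),
        Finset.sum_congr rfl e1, Finset.sum_congr rfl e2]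
      simp
      abel
  intro t
  induction t with
  | zero =>
    constructor
    · rw [hθf0, hmf0]; simp [hA0]
    · rw [hθr 0, hθf0, hmr 0, hmf0]
      simp [hA0, hAs 0]
      module
  | succ t ih =>
    obtain ⟨ihf, ihr⟩ := ih
    have hf : -θf (t + 1) = (∑ i ∈ Finset.range (t + 2), A (2 * (t + 1 - i)) • gf i)
            + ∑ i ∈ Finset.range (t + 1), A (2 * (t + 1 - i) - 1) • gr i := by
      have : -θf (t + 1) = -θr t + mf (t + 1) := by rw [hθf t]; abel
      rw [this, ihr, (hm (t + 1)).1,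
        Finset.sum_range_succ (fun i => A (2 * (t + 1 - i)) • gf i),
        Finset.sum_range_succ (fun i => (α ^ (2 * (t + 1 - i))) • gf i)]
      have e1 : ∀ i ∈ Finset.range (t + 1),
          A (2 * (t + 1 - i)) • gf i
            = A (2 * (t - i) + 1) • gf i + (α ^ (2 * (t + 1 - i))) • gf i := by
        intro i hi
        rw [Finset.mem_range] at hi
        have h2 : 2 * (t + 1 - i) = (2 * (t - i) + 1) + 1 := by omega
        rw [h2, hAs, add_smul]
      have e2 : ∀ i ∈ Finset.range (t + 1),
          A (2 * (t + 1 - i) - 1) • gr i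
            = A (2 * (t - i)) • gr i + (α ^ (2 * (t + 1 - i) - 1)) • gr i := by
        intro i hi
        rw [Finset.mem_range] at hi
        have h2 : 2 * (t + 1 - i) - 1 = 2 * (t - i) + 1 := by omega
        rw [h2, hAs, add_smul]
      rw [Finset.sum_congr rfl e1, Finset.sum_congr rfl e2,
        Finset.sum_add_distrib, Finset.sum_add_distrib]
      simp [hA0]
      abel
    refine ⟨hf, ?_⟩
    have : -θr (t + 1) = -θf (t + 1) + mr (t + 1) := by rw [hθr (t + 1)]; abel
    rw [this, hf, (hm (t + 1)).2,
      Finset.sum_range_succ (fun i => A (2 * (t + 1 - i) + 1) • gf i),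
      Finset.sum_range_succ (fun i => (α ^ (2 * (t + 1 - i) + 1)) • gf i),
      Finset.sum_range_succ (fun i => A (2 * (t + 1 - i)) • gf i),
      Finset.sum_range_succ (fun i => (α ^ (2 * (t + 1 - i))) • gr i),
      Finset.sum_range_succ (fun i => A (2 * (t + 1 - i)) • gr i)]
    have e1 : ∀ i ∈ Finset.range (t + 1),
        A (2 * (t + 1 - i) + 1) • gf i
          = A (2 * (t + 1 - i)) • gf i + (α ^ (2 * (t + 1 - i) + 1)) • gf i := by
      intro i hi
      rw [hAs, add_smul]
    have e2 : ∀ i ∈ Finset.range (t + 1),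
        A (2 * (t + 1 - i)) • gr i
          = A (2 * (t + 1 - i) - 1) • gr i + (α ^ (2 * (t + 1 - i))) • gr i := by
      intro i hi
      rw [Finset.mem_range] at hi
      have h2 : 2 * (t + 1 - i) = (2 * (t + 1 - i) - 1) + 1 := by omega
      rw [h2, hAs, add_smul, ← h2]
    rw [Finset.sum_congr rfl e1, Finset.sum_congr rfl e2,
      Finset.sum_add_distrib, Finset.sum_add_distrib]
    simp [hA0, hAs 0]
    module
end

section
/- Let σ² ≥ 0, L ≥ 0, τ ∈ [0,1], and α ∈ [0,1], and set A_k := Σ_{j=0}^k α^j for k ∈ ℕ. Define four sequences of reals V_f^S, V_r^S, V_f^D, V_r^D on ℕ, with the convention V_r^S(−1) = V_r^D(−1) = 0, by: V_f^S(t) = (1+tτ)·Σ_{i=0}^t A_{2(t−i)}²·(σ² + L²·V_r^S(i−1)) + (1+(t−1)τ)·Σ_{i=0}^{t−1} A_{2(t−i)−1}²·(σ² + L²·V_f^S(i)); V_r^S(t) = (1+tτ)·Σ_{i=0}^t A_{2(t−i)+1}²·(σ² + L²·V_r^S(i−1)) + (1+tτ)·Σ_{i=0}^t A_{2(t−i)}²·(σ²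 + L²·V_f^S(i)); V_f^D(t) = (1+tτ)·Σ_{i=0}^t A_{t−i}²·(σ² + L²·V_r^D(i−1)) + (1+(t−1)τ)·Σ_{i=0}^{t−1} A_{t−i−1}²·(σ² + L²·V_f^D(i)); V_r^D(t) = (1+tτ)·Σ_{i=0}^t A_{t−i}²·(σ² + L²·V_r^D(i−1)) + (1+tτ)·Σ_{i=0}^t A_{t−i}²·(σ² + L²·V_f^D(i)). Then for every t ∈ ℕ: V_f^D(t) ≤ V_f^S(t) and V_r^D(t) ≤ V_r^S(t). (That is, the worst-case parameter-variance bounds for the decoupled momentum scheme never exceed those of the shared momentum scheme.) -/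
/-! Compare the two recursions term by term and argue by strong induction on `t` that
`0 ≤ V^D ≤ V^S` for both sequences. The decoupled recursions weigh each earlier
value by `A_k` with `k` no larger than the corresponding index of the shared ones
(`t - i ≤ 2(t - i)` and so on). Since `α ≥ 0`, `A` is nonnegative and monotone, so
every decoupled weight is at most the matching shared weight. Every other factor is
nonnegative and monotone in the earlier values. -/

open Finset

theorem monotone_sum_range_pow {α : ℝ} (hα : 0 ≤ α) :
    Monotone fun k => ∑ j ∈ range (k + 1), α ^ j :=
  monotone_nat_of_le_succ fun k => by
    simpa [sum_range_succ _ (k + 1)] using pow_nonneg hα (k + 1)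

theorem sum_mul_le_sum_mul_of_nonneg {ι : Type*} (s : Finset ι) {a b x y : ι → ℝ}
    (hab : ∀ i ∈ s, 0 ≤ a i ∧ a i ≤ b i) (hxy : ∀ i ∈ s, 0 ≤ x i ∧ x i ≤ y i) :
    0 ≤ ∑ i ∈ s, a i * x i ∧ ∑ i ∈ s, a i * x i ≤ ∑ i ∈ s, b i * y i :=
  ⟨sum_nonneg fun i hi => mul_nonneg (hab i hi).1 (hxy i hi).1,
    sum_le_sum fun i hi =>
      mul_le_mul (hab i hi).2 (hxy i hi).2 (hxy i hi).1 ((hab i hi).1.trans (hab i hi).2)⟩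

theorem shift_nonneg_le {u v : ℕ → ℝ} {t : ℕ} (h : ∀ j < t, 0 ≤ u j ∧ u j ≤ v j) :
    ∀ i ∈ range (t + 1), 0 ≤ (if i = 0 then 0 else u (i - 1)) ∧
      (if i = 0 then 0 else u (i - 1)) ≤ (if i = 0 then 0 else v (i - 1)) := by
  intro i hi
  split_ifs with hi0
  · exact ⟨le_rfl, le_rfl⟩
  · exact h (i - 1) (by rw [mem_range] at hi; omega)

section WeightedNoiseSum

variable {A : ℕ → ℝ} (hA0 : ∀ k, 0 ≤ A k) (hA : Monotone A) {σ2 : ℝ} (hσ2 : 0 ≤ σ2) (L : ℝ)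
  {c : ℝ} (hc : 0 ≤ c)
include hA0 hA hσ2 hc

theorem mul_sum_sq_mul_noise_le (s : Finset ℕ) {m n : ℕ → ℕ} (hmn : ∀ i ∈ s, m i ≤ n i)
    {x y : ℕ → ℝ} (hxy : ∀ i ∈ s, 0 ≤ x i ∧ x i ≤ y i) :
    0 ≤ c * ∑ i ∈ s, A (m i) ^ 2 * (σ2 + L ^ 2 * x i) ∧
      c * ∑ i ∈ s, A (m i) ^ 2 * (σ2 + L ^ 2 * x i) ≤
        c * ∑ i ∈ s, A (n i) ^ 2 * (σ2 + L ^ 2 * y i) := by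
  have hsum := sum_mul_le_sum_mul_of_nonneg s
    (a := fun i => A (m i) ^ 2) (b := fun i => A (n i) ^ 2)
    (x := fun i => σ2 + L ^ 2 * x i) (y := fun i => σ2 + L ^ 2 * y i)
    (fun i hi => ⟨sq_nonneg _, pow_le_pow_left₀ (hA0 _) (hA (hmn i hi)) 2⟩)
    (fun i hi => ⟨add_nonneg hσ2 (mul_nonneg (sq_nonneg L) (hxy i hi).1),
      add_le_add_right (mul_le_mul_of_nonneg_left (hxy i hi).2 (sq_nonneg L)) _⟩)
  exact ⟨mul_nonneg hc hsum.1, mul_le_mul_of_nonneg_left hsum.2 hc⟩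

end WeightedNoiseSum

theorem variance_bound_decoupled_le_shared_general
    (σ2 L τ α : ℝ) (hσ2 : 0 ≤ σ2)
    (hτ0 : 0 ≤ τ) (hτ1 : τ ≤ 1) (hα0 : 0 ≤ α)
    (A : ℕ → ℝ) (hA : ∀ k, A k = ∑ j ∈ Finset.range (k + 1), α ^ j)
    (VfS VrS VfD VrD : ℕ → ℝ)
    (hVfS : ∀ t : ℕ, VfS t =
      (1 + (t : ℝ) * τ) * ∑ i ∈ Finset.range (t + 1),
        A (2 * (t - i)) ^ 2 * (σ2 + L ^ 2 * (if i = 0 then 0 else VrS (i - 1)))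
      + (1 + ((t : ℝ) - 1) * τ) * ∑ i ∈ Finset.range t,
        A (2 * (t - i) - 1) ^ 2 * (σ2 + L ^ 2 * VfS i))
    (hVrS : ∀ t : ℕ, VrS t =
      (1 + (t : ℝ) * τ) * ∑ i ∈ Finset.range (t + 1),
        A (2 * (t - i) + 1) ^ 2 * (σ2 + L ^ 2 * (if i = 0 then 0 else VrS (i - 1)))
      + (1 + (t : ℝ) * τ) * ∑ i ∈ Finset.range (t + 1),
        A (2 * (t - i)) ^ 2 * (σ2 + L ^ 2 * VfS i))
    (hVfD : ∀ t : ℕ, VfD t =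
      (1 + (t : ℝ) * τ) * ∑ i ∈ Finset.range (t + 1),
        A (t - i) ^ 2 * (σ2 + L ^ 2 * (if i = 0 then 0 else VrD (i - 1)))
      + (1 + ((t : ℝ) - 1) * τ) * ∑ i ∈ Finset.range t,
        A (t - i - 1) ^ 2 * (σ2 + L ^ 2 * VfD i))
    (hVrD : ∀ t : ℕ, VrD t =
      (1 + (t : ℝ) * τ) * ∑ i ∈ Finset.range (t + 1),
        A (t - i) ^ 2 * (σ2 + L ^ 2 * (if i = 0 then 0 else VrD (i - 1)))
      + (1 + (t : ℝ) * τ) * ∑ i ∈ Finset.range (t + 1),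
        A (t - i) ^ 2 * (σ2 + L ^ 2 * VfD i)) :
    ∀ t : ℕ, VfD t ≤ VfS t ∧ VrD t ≤ VrS t := by
  obtain rfl : A = fun k => ∑ j ∈ range (k + 1), α ^ j := funext hA
  have hA0 (k : ℕ) : 0 ≤ ∑ j ∈ range (k + 1), α ^ j := sum_nonneg fun j _ => pow_nonneg hα0 j
  have hAm := monotone_sum_range_pow hα0
  have hc (t : ℕ) : 0 ≤ 1 + (t : ℝ) * τ := by positivity
  have hc' (t : ℕ) : 0 ≤ 1 + ((t : ℝ) - 1) * τ := by nlinarith [(t.cast_nonneg : (0 : ℝ) ≤ t)]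
  suffices H : ∀ t, (0 ≤ VfD t ∧ VfD t ≤ VfS t) ∧ (0 ≤ VrD t ∧ VrD t ≤ VrS t) from
    fun t => ⟨(H t).1.2, (H t).2.2⟩
  intro t
  induction t using Nat.strong_induction_on with
  | _ t ih =>
  have hr := shift_nonneg_le (fun j hj => (ih j hj).2)
  have hf : 0 ≤ VfD t ∧ VfD t ≤ VfS t := by
    have h₁ := mul_sum_sq_mul_noise_le hA0 hAm hσ2 L (hc t) (range (t + 1)) (m := fun i => t - i)
      (n := fun i => 2 * (t - i)) (fun i _ => by omega) hr
    have h₂ := mul_sum_sq_mul_noise_le hA0 hAm hσ2 L (hc' t) (range t) (m := fun i => t - i - 1)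
      (n := fun i => 2 * (t - i) - 1) (fun i _ => by omega)
      (fun i hi => (ih i (by simpa using hi)).1)
    rw [hVfD t, hVfS t]
    exact ⟨add_nonneg h₁.1 h₂.1, add_le_add h₁.2 h₂.2⟩
  have hf' : ∀ i ∈ range (t + 1), 0 ≤ VfD i ∧ VfD i ≤ VfS i := by
    intro i hi
    rcases (mem_range_succ_iff.mp hi).lt_or_eq with h | rfl
    exacts [(ih i h).1, hf]
  have h₁ := mul_sum_sq_mul_noise_le hA0 hAm hσ2 L (hc t) (range (t + 1)) (m := fun i => t - i)
    (n := fun i => 2 * (t - i) + 1) (fun i _ => by omega) hr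
  have h₂ := mul_sum_sq_mul_noise_le hA0 hAm hσ2 L (hc t) (range (t + 1)) (m := fun i => t - i)
    (n := fun i => 2 * (t - i)) (fun i _ => by omega) hf'
  rw [hVrD t, hVrS t]
  exact ⟨hf, add_nonneg h₁.1 h₂.1, add_le_add h₁.2 h₂.2⟩

/-- **Variance bound comparison for decoupled vs. shared momentum.** Let `σ² ≥ 0`,
`L ≥ 0`, `τ ∈ [0,1]`, `α ∈ [0,1]`, and `A_k = Σ_{j=0}^k α^j`. The worst-case
parameter-variance bounds `V_f^S, V_r^S` (shared momentum) and `V_f^D, V_r^D`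
(decoupled momentum), defined by the stated recursions with the convention
`V_r^S(−1) = V_r^D(−1) = 0` (encoded via an `if i = 0` branch), satisfy
`V_f^D(t) ≤ V_f^S(t)` and `V_r^D(t) ≤ V_r^S(t)` for every `t`. -/
theorem variance_bound_decoupled_le_shared
    (σ2 L τ α : ℝ) (hσ2 : 0 ≤ σ2) (hL : 0 ≤ L)
    (hτ0 : 0 ≤ τ) (hτ1 : τ ≤ 1) (hα0 : 0 ≤ α) (hα1 : α ≤ 1)
    (A : ℕ → ℝ) (hA : ∀ k, A k = ∑ j ∈ Finset.range (k + 1), α ^ j)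
    (VfS VrS VfD VrD : ℕ → ℝ)
    (hVfS : ∀ t : ℕ, VfS t =
      (1 + (t : ℝ) * τ) * ∑ i ∈ Finset.range (t + 1),
        A (2 * (t - i)) ^ 2 * (σ2 + L ^ 2 * (if i = 0 then 0 else VrS (i - 1)))
      + (1 + ((t : ℝ) - 1) * τ) * ∑ i ∈ Finset.range t,
        A (2 * (t - i) - 1) ^ 2 * (σ2 + L ^ 2 * VfS i))
    (hVrS : ∀ t : ℕ, VrS t =
      (1 + (t : ℝ) * τ) * ∑ i ∈ Finset.range (t + 1),
        A (2 * (t - i) + 1) ^ 2 * (σ2 + L ^ 2 * (if i = 0 then 0 else VrS (i - 1)))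
      + (1 + (t : ℝ) * τ) * ∑ i ∈ Finset.range (t + 1),
        A (2 * (t - i)) ^ 2 * (σ2 + L ^ 2 * VfS i))
    (hVfD : ∀ t : ℕ, VfD t =
      (1 + (t : ℝ) * τ) * ∑ i ∈ Finset.range (t + 1),
        A (t - i) ^ 2 * (σ2 + L ^ 2 * (if i = 0 then 0 else VrD (i - 1)))
      + (1 + ((t : ℝ) - 1) * τ) * ∑ i ∈ Finset.range t,
        A (t - i - 1) ^ 2 * (σ2 + L ^ 2 * VfD i))
    (hVrD : ∀ t : ℕ, VrD t =
      (1 + (t : ℝ) * τ) * ∑ i ∈ Finset.range (t + 1),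
        A (t - i) ^ 2 * (σ2 + L ^ 2 * (if i = 0 then 0 else VrD (i - 1)))
      + (1 + (t : ℝ) * τ) * ∑ i ∈ Finset.range (t + 1),
        A (t - i) ^ 2 * (σ2 + L ^ 2 * VfD i)) :
    ∀ t : ℕ, VfD t ≤ VfS t ∧ VrD t ≤ VrS t :=
  variance_bound_decoupled_le_shared_general σ2 L τ α hσ2 hτ0 hτ1 hα0 A hA VfS VrS VfD VrD hVfS hVrS
    hVfD hVrD
end
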